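/- Let u₁, ū₂, ū₃ : ℝ² → ℝ be smooth functions satisfying the transformed characteristic system ∂x ū₃ = ū₃, ∂y ū₂ = 2ū₃ + ū₂, (∂x + ∂y)u₁ = ū₃ + 2ū₂ + u₁. Define u₂ := ū₂ − 2u₁ and u₃ := ∂x u₁ + 3u₁ − 2ū₂. Then (u₁, u₂, u₃) satisfies the original characteristic system ∂x u₁ = u₁ + 2u₂ + u₃, ∂y u₂ = −6u₁ + u₂ + 2u₃, (∂x + ∂y)u₃ = 12u₁ + 6u₂ + u₃. -/

import Mathlib

/-- Partial derivative with respect to the first variable. -/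
noncomputable def pdx (f : ℝ → ℝ → ℝ) : ℝ → ℝ → ℝ := fun x y => deriv (fun s => f s y) x

/-- Partial derivative with respect to the second variable. -/
noncomputable def pdy (f : ℝ → ℝ → ℝ) : ℝ → ℝ → ℝ := fun x y => deriv (fun t => f x t) y

/-- A function of two real variables is smooth. -/
def Smooth2 (f : ℝ → ℝ → ℝ) : Prop := ContDiff ℝ (⊤ : ℕ∞) (Function.uncurry f)

/-- u₂ := ū₂ − 2u₁. -/
noncomputable def uorig₂ (u₁ v₂ : ℝ → ℝ → ℝ) : ℝ → ℝ → ℝ :=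
  fun x y => v₂ x y - 2 * u₁ x y

/-- u₃ := ∂x u₁ + 3u₁ − 2ū₂. -/
noncomputable def uorig₃ (u₁ v₂ : ℝ → ℝ → ℝ) : ℝ → ℝ → ℝ :=
  fun x y => pdx u₁ x y + 3 * u₁ x y - 2 * v₂ x y

open Function

private lemma hasDerivAt_pdx (f : ℝ → ℝ → ℝ) (hf : Smooth2 f) (x y : ℝ) :
    HasDerivAt (fun s => f s y) (fderiv ℝ (uncurry f) (x, y) (1, 0)) x := by
  have hF : HasFDerivAt (uncurry f) (fderiv ℝ (uncurry f) (x, y)) (x, y) :=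
    (hf.differentiable (by simp) (x, y)).hasFDerivAt
  have hg : HasDerivAt (fun s : ℝ => (s, y)) ((1 : ℝ), (0 : ℝ)) x :=
    HasDerivAt.prodMk (hasDerivAt_id x) (hasDerivAt_const x y)
  exact hF.comp_hasDerivAt x hg

private lemma hasDerivAt_pdy (f : ℝ → ℝ → ℝ) (hf : Smooth2 f) (x y : ℝ) :
    HasDerivAt (fun t => f x t) (fderiv ℝ (uncurry f) (x, y) (0, 1)) y := by
  have hF : HasFDerivAt (uncurry f) (fderiv ℝ (uncurry f) (x, y)) (x, y) :=
    (hf.differentiable (by simp) (x, y)).hasFDerivAt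
  have hg : HasDerivAt (fun t : ℝ => (x, t)) ((0 : ℝ), (1 : ℝ)) y :=
    HasDerivAt.prodMk (hasDerivAt_const y x) (hasDerivAt_id y)
  exact hF.comp_hasDerivAt y hg

private lemma pdx_eq (f : ℝ → ℝ → ℝ) (hf : Smooth2 f) (x y : ℝ) :
    pdx f x y = fderiv ℝ (uncurry f) (x, y) (1, 0) :=
  (hasDerivAt_pdx f hf x y).deriv

private lemma pdy_eq (f : ℝ → ℝ → ℝ) (hf : Smooth2 f) (x y : ℝ) :
    pdy f x y = fderiv ℝ (uncurry f) (x, y) (0, 1) :=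
  (hasDerivAt_pdy f hf x y).deriv

private lemma smooth2_pdx (f : ℝ → ℝ → ℝ) (hf : Smooth2 f) : Smooth2 (pdx f) := by
  have h : uncurry (pdx f) = fun p : ℝ × ℝ => fderiv ℝ (uncurry f) p ((1 : ℝ), (0 : ℝ)) := by
    funext p
    exact pdx_eq f hf p.1 p.2
  rw [Smooth2, h]
  exact (hf.fderiv_right (by simp)).clm_apply contDiff_const

private lemma smooth2_pdy (f : ℝ → ℝ → ℝ) (hf : Smooth2 f) : Smooth2 (pdy f) := by
  have h : uncurry (pdy f) = fun p : ℝ × ℝ => fderiv ℝ (uncurry f) p ((0 : ℝ), (1 : ℝ)) := by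
    funext p
    exact pdy_eq f hf p.1 p.2
  rw [Smooth2, h]
  exact (hf.fderiv_right (by simp)).clm_apply contDiff_const

/-- Clairaut's theorem for smooth functions of two variables. -/
private lemma pdx_pdy_comm (f : ℝ → ℝ → ℝ) (hf : Smooth2 f) (x y : ℝ) :
    pdx (pdy f) x y = pdy (pdx f) x y := by
  set F := uncurry f with hFdef
  have hF' : ∀ p : ℝ × ℝ, HasFDerivAt F (fderiv ℝ F p) p := fun p =>
    (hf.differentiable (by simp) p).hasFDerivAt
  have hdF : ContDiff ℝ (⊤ : ℕ∞) (fderiv ℝ F) := hf.fderiv_right (by simp)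
  have hF'' : HasFDerivAt (fderiv ℝ F) (fderiv ℝ (fderiv ℝ F) (x, y)) (x, y) :=
    (hdF.differentiable (by simp) (x, y)).hasFDerivAt
  have sym := second_derivative_symmetric hF' hF''
      ((1 : ℝ), (0 : ℝ)) ((0 : ℝ), (1 : ℝ))
  -- pdx (pdy f) x y = D²F (1,0) (0,1)
  have h1 : pdx (pdy f) x y = fderiv ℝ (fderiv ℝ F) (x, y) (1, 0) (0, 1) := by
    have hg : HasDerivAt (fun s : ℝ => (s, y)) ((1 : ℝ), (0 : ℝ)) x :=
      HasDerivAt.prodMk (hasDerivAt_id x) (hasDerivAt_const x y)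
    have hcomp : HasDerivAt (fun s : ℝ => fderiv ℝ F (s, y))
        (fderiv ℝ (fderiv ℝ F) (x, y) (1, 0)) x := hF''.comp_hasDerivAt x hg
    have hap : HasDerivAt (fun s : ℝ => fderiv ℝ F (s, y) ((0 : ℝ), (1 : ℝ)))
        (fderiv ℝ (fderiv ℝ F) (x, y) (1, 0) ((0 : ℝ), (1 : ℝ))) x :=
      (ContinuousLinearMap.apply ℝ ℝ ((0 : ℝ), (1 : ℝ))).hasFDerivAt.comp_hasDerivAt x hcomp
    have heq : (fun s : ℝ => pdy f s y) = fun s : ℝ => fderiv ℝ F (s, y) ((0 : ℝ), (1 : ℝ)) := by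
      funext s
      exact pdy_eq f hf s y
    show deriv (fun s : ℝ => pdy f s y) x = _
    rw [heq]
    exact hap.deriv
  -- pdy (pdx f) x y = D²F (0,1) (1,0)
  have h2 : pdy (pdx f) x y = fderiv ℝ (fderiv ℝ F) (x, y) (0, 1) (1, 0) := by
    have hg : HasDerivAt (fun t : ℝ => (x, t)) ((0 : ℝ), (1 : ℝ)) y :=
      HasDerivAt.prodMk (hasDerivAt_const y x) (hasDerivAt_id y)
    have hcomp : HasDerivAt (fun t : ℝ => fderiv ℝ F (x, t))
        (fderiv ℝ (fderiv ℝ F) (x, y) (0, 1)) y := hF''.comp_hasDerivAt y hg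
    have hap : HasDerivAt (fun t : ℝ => fderiv ℝ F (x, t) ((1 : ℝ), (0 : ℝ)))
        (fderiv ℝ (fderiv ℝ F) (x, y) (0, 1) ((1 : ℝ), (0 : ℝ))) y :=
      (ContinuousLinearMap.apply ℝ ℝ ((1 : ℝ), (0 : ℝ))).hasFDerivAt.comp_hasDerivAt y hcomp
    have heq : (fun t : ℝ => pdx f x t) = fun t : ℝ => fderiv ℝ F (x, t) ((1 : ℝ), (0 : ℝ)) := by
      funext t
      exact pdx_eq f hf x t
    show deriv (fun t : ℝ => pdx f x t) y = _
    rw [heq]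
    exact hap.deriv
  rw [h1, h2, sym]

/-- The inverse generalized Laplace transformation: solutions of the transformed
    upper-triangular system ∂x ū₃ = ū₃, ∂y ū₂ = 2ū₃+ū₂, (∂x+∂y)u₁ = ū₃+2ū₂+u₁ yield,
    via u₂ = ū₂ − 2u₁ and u₃ = ∂x u₁ + 3u₁ − 2ū₂, solutions of the original system
    ∂x u₁ = u₁+2u₂+u₃, ∂y u₂ = −6u₁+u₂+2u₃, (∂x+∂y)u₃ = 12u₁+6u₂+u₃. -/
theorem generalized_laplace_transform_3x3_inverse
    (u₁ v₂ v₃ : ℝ → ℝ → ℝ)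
    (hu₁ : Smooth2 u₁) (hv₂ : Smooth2 v₂) (hv₃ : Smooth2 v₃)
    (e₁ : ∀ x y : ℝ, pdx v₃ x y = v₃ x y)
    (e₂ : ∀ x y : ℝ, pdy v₂ x y = 2 * v₃ x y + v₂ x y)
    (e₃ : ∀ x y : ℝ, pdx u₁ x y + pdy u₁ x y = v₃ x y + 2 * v₂ x y + u₁ x y) :
    (∀ x y : ℝ, pdx u₁ x y
        = u₁ x y + 2 * uorig₂ u₁ v₂ x y + uorig₃ u₁ v₂ x y) ∧
    (∀ x y : ℝ, pdy (uorig₂ u₁ v₂) x y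
        = -6 * u₁ x y + uorig₂ u₁ v₂ x y + 2 * uorig₃ u₁ v₂ x y) ∧
    (∀ x y : ℝ, pdx (uorig₃ u₁ v₂) x y + pdy (uorig₃ u₁ v₂) x y
        = 12 * u₁ x y + 6 * uorig₂ u₁ v₂ x y + uorig₃ u₁ v₂ x y) := by
  refine ⟨?_, ?_, ?_⟩
  · intro x y
    simp only [uorig₂, uorig₃]
    ring
  · intro x y
    have h2 : pdy (uorig₂ u₁ v₂) x y = pdy v₂ x y - 2 * pdy u₁ x y := by
      have hv := hasDerivAt_pdy v₂ hv₂ x y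
      have hu := hasDerivAt_pdy u₁ hu₁ x y
      have : HasDerivAt (fun t => v₂ x t - 2 * u₁ x t)
          (fderiv ℝ (uncurry v₂) (x, y) (0, 1) - 2 * fderiv ℝ (uncurry u₁) (x, y) (0, 1)) y :=
        hv.sub (hu.const_mul 2)
      rw [show pdy (uorig₂ u₁ v₂) x y = deriv (fun t => v₂ x t - 2 * u₁ x t) y from rfl,
        this.deriv, pdy_eq v₂ hv₂, pdy_eq u₁ hu₁]
    have h3 := e₃ x y
    have h4 := e₂ x y
    simp only [uorig₂, uorig₃] at *
    rw [h2]
    linarith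
  · intro x y
    -- derivative of e₃ in x
    have hkey : pdx (pdx u₁) x y + pdx (pdy u₁) x y
        = pdx v₃ x y + 2 * pdx v₂ x y + pdx u₁ x y := by
      have hL : HasDerivAt (fun s => pdx u₁ s y + pdy u₁ s y)
          (pdx (pdx u₁) x y + pdx (pdy u₁) x y) x := by
        have h1 := hasDerivAt_pdx (pdx u₁) (smooth2_pdx u₁ hu₁) x y
        have h2 := hasDerivAt_pdx (pdy u₁) (smooth2_pdy u₁ hu₁) x y
        rw [← pdx_eq (pdx u₁) (smooth2_pdx u₁ hu₁) x y] at h1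
        rw [← pdx_eq (pdy u₁) (smooth2_pdy u₁ hu₁) x y] at h2
        exact h1.add h2
      have hR : HasDerivAt (fun s => v₃ s y + 2 * v₂ s y + u₁ s y)
          (pdx v₃ x y + 2 * pdx v₂ x y + pdx u₁ x y) x := by
        have h1 := hasDerivAt_pdx v₃ hv₃ x y
        have h2 := hasDerivAt_pdx v₂ hv₂ x y
        have h3 := hasDerivAt_pdx u₁ hu₁ x y
        rw [← pdx_eq v₃ hv₃ x y] at h1
        rw [← pdx_eq v₂ hv₂ x y] at h2
        rw [← pdx_eq u₁ hu₁ x y] at h3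
        exact (h1.add (h2.const_mul 2)).add h3
      have hfun : (fun s => pdx u₁ s y + pdy u₁ s y)
          = fun s => v₃ s y + 2 * v₂ s y + u₁ s y := by
        funext s; exact e₃ s y
      rw [hfun] at hL
      exact hL.unique hR
    have hcomm := pdx_pdy_comm u₁ hu₁ x y
    -- compute pdx and pdy of uorig₃
    have hx3 : pdx (uorig₃ u₁ v₂) x y
        = pdx (pdx u₁) x y + 3 * pdx u₁ x y - 2 * pdx v₂ x y := by
      have h1 := hasDerivAt_pdx (pdx u₁) (smooth2_pdx u₁ hu₁) x y
      have h2 := hasDerivAt_pdx u₁ hu₁ x y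
      have h3 := hasDerivAt_pdx v₂ hv₂ x y
      rw [← pdx_eq (pdx u₁) (smooth2_pdx u₁ hu₁) x y] at h1
      rw [← pdx_eq u₁ hu₁ x y] at h2
      rw [← pdx_eq v₂ hv₂ x y] at h3
      have : HasDerivAt (fun s => pdx u₁ s y + 3 * u₁ s y - 2 * v₂ s y)
          (pdx (pdx u₁) x y + 3 * pdx u₁ x y - 2 * pdx v₂ x y) x :=
        (h1.add (h2.const_mul 3)).sub (h3.const_mul 2)
      exact this.deriv
    have hy3 : pdy (uorig₃ u₁ v₂) x y
        = pdy (pdx u₁) x y + 3 * pdy u₁ x y - 2 * pdy v₂ x y := by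
      have h1 := hasDerivAt_pdy (pdx u₁) (smooth2_pdx u₁ hu₁) x y
      have h2 := hasDerivAt_pdy u₁ hu₁ x y
      have h3 := hasDerivAt_pdy v₂ hv₂ x y
      rw [← pdy_eq (pdx u₁) (smooth2_pdx u₁ hu₁) x y] at h1
      rw [← pdy_eq u₁ hu₁ x y] at h2
      rw [← pdy_eq v₂ hv₂ x y] at h3
      have : HasDerivAt (fun t => pdx u₁ x t + 3 * u₁ x t - 2 * v₂ x t)
          (pdy (pdx u₁) x y + 3 * pdy u₁ x y - 2 * pdy v₂ x y) y :=
        (h1.add (h2.const_mul 3)).sub (h3.const_mul 2)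
      exact this.deriv
    have h1 := e₁ x y
    have h2 := e₂ x y
    have h3 := e₃ x y
    simp only [uorig₂, uorig₃]
    rw [hx3, hy3]
    linarith
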